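/- Let hol ⊂ so(2,4) be the set of 6×6 matrices of the form [[h₅,-h₆,h₂,-h₁,h₈,0],[h₆,h₅,h₁,h₂,0,-h₈],[h₃,-h₄,0,2h₆,-h₁,-h₂],[h₄,h₃,-2h₆,0,-h₂,h₁],[h₇,0,h₄,-h₃,-h₅,h₆],[0,-h₇,-h₃,-h₄,-h₆,-h₅]] for h₁,...,h₈ ∈ ℝ. Then hol is a Lie subalgebra of so(2,4) (closed under the commutator) and is isomorphic to su(2,1). -/

import Mathlib

open Matrix

/-- The parametrization of the holonomy algebra hol ⊂ so(2,4),
h₁,...,h₈ = h 0,...,h 7. -/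
noncomputable def hmat (h : Fin 8 → ℝ) : Matrix (Fin 6) (Fin 6) ℝ :=
  !![h 4, -h 5, h 1, -h 0, h 7, 0;
     h 5, h 4, h 0, h 1, 0, -h 7;
     h 2, -h 3, 0, 2 * h 5, -h 0, -h 1;
     h 3, h 2, -2 * h 5, 0, -h 1, h 0;
     h 6, 0, h 3, -h 2, -h 4, h 5;
     0, -h 6, -h 2, -h 3, -h 5, -h 4]

/-- The defining form of so(2,4) in the paper's (1,1,2,1,1)-antidiagonal-block
conventions (p = 1, q = 3). -/
noncomputable def bg6 : Matrix (Fin 6) (Fin 6) ℝ :=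
  !![0, 0, 0, 0, 0, 1;
     0, 0, 0, 0, 1, 0;
     0, 0, 1, 0, 0, 0;
     0, 0, 0, 1, 0, 0;
     0, 1, 0, 0, 0, 0;
     1, 0, 0, 0, 0, 0]

/-- A Hermitian form of signature (2,1). -/
noncomputable def hform : Matrix (Fin 3) (Fin 3) ℂ :=
  !![1, 0, 0; 0, 1, 0; 0, 0, -1]

/-!
Everything is an explicit finite computation. The commutator of two matrices of `hmat`-shape is
again of that shape, with structure constants `holBracket`. The real-linear map `toSu21` lands in
su(2,1) and turns `holBracket` into the matrix commutator; the coordinate map `su21Coords` is a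
left inverse of it, and also a right inverse on su(2,1), since the conditions defining su(2,1)
leave exactly the eight real parameters that `su21Coords` reads off.
-/

def hmatCoords (M : Matrix (Fin 6) (Fin 6) ℝ) : Fin 8 → ℝ :=
  ![M 1 2, M 0 2, M 2 0, M 3 0, M 0 0, M 1 0, M 4 0, M 0 4]

lemma hmatCoords_hmat (h : Fin 8 → ℝ) : hmatCoords (hmat h) = h := by
  funext i
  fin_cases i <;> rfl

lemma hmat_injective : Function.Injective hmat :=
  Function.LeftInverse.injective hmatCoords_hmat

lemma hmat_mem_so24 (h : Fin 8 → ℝ) : (hmat h)ᵀ * bg6 + bg6 * hmat h = 0 := by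
  ext i j
  fin_cases i <;> fin_cases j <;> simp [Matrix.mul_apply, Fin.sum_univ_succ, hmat, bg6]

noncomputable def holBracket (a b : Fin 8 → ℝ) : Fin 8 → ℝ :=
  ![a 4 * b 0 - a 0 * b 4 + 3 * (a 5 * b 1 - a 1 * b 5) + a 7 * b 2 - a 2 * b 7,
    a 4 * b 1 - a 1 * b 4 - 3 * (a 5 * b 0 - a 0 * b 5) + a 7 * b 3 - a 3 * b 7,
    a 2 * b 4 - a 4 * b 2 - 3 * (a 3 * b 5 - a 5 * b 3) + a 6 * b 0 - a 0 * b 6,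
    a 3 * b 4 - a 4 * b 3 + 3 * (a 2 * b 5 - a 5 * b 2) + a 6 * b 1 - a 1 * b 6,
    a 1 * b 2 - a 2 * b 1 + a 3 * b 0 - a 0 * b 3 + a 7 * b 6 - a 6 * b 7,
    a 0 * b 2 - a 2 * b 0 + a 1 * b 3 - a 3 * b 1,
    2 * (a 6 * b 4 - a 4 * b 6) + 2 * (a 3 * b 2 - a 2 * b 3),
    2 * (a 4 * b 7 - a 7 * b 4) + 2 * (a 0 * b 1 - a 1 * b 0)]

set_option maxHeartbeats 1000000 in
lemma hmat_mul_sub_mul (a b : Fin 8 → ℝ) :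
    hmat a * hmat b - hmat b * hmat a = hmat (holBracket a b) := by
  ext i j
  simp only [Matrix.sub_apply, Matrix.mul_apply, Fin.sum_univ_six]
  fin_cases i <;> fin_cases j <;> simp [hmat, holBracket] <;> ring

open Complex in
noncomputable def toSu21 : (Fin 8 → ℝ) →ₗ[ℝ] Matrix (Fin 3) (Fin 3) ℂ where
  toFun h :=
    !![(h 5 + h 6 - h 7 / 4) * I, (h 0 / 2 + h 3) + (h 2 - h 1 / 2) * I, h 4 + (h 6 + h 7 / 4) * I;
      (-(h 0 / 2) - h 3) + (h 2 - h 1 / 2) * I, -2 * h 5 * I, (h 0 / 2 - h 3) + (h 2 + h 1 / 2) * I;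
      h 4 - (h 6 + h 7 / 4) * I, (h 0 / 2 - h 3) - (h 2 + h 1 / 2) * I, (h 5 - h 6 + h 7 / 4) * I]
  map_add' a b := by
    ext i j
    fin_cases i <;> fin_cases j <;> apply Complex.ext <;> simp <;> ring
  map_smul' c a := by
    ext i j
    fin_cases i <;> fin_cases j <;> apply Complex.ext <;> simp <;> ring

noncomputable def su21Coords (X : Matrix (Fin 3) (Fin 3) ℂ) : Fin 8 → ℝ :=
  ![(X 0 1).re + (X 1 2).re,
    (X 1 2).im - (X 0 1).im,
    ((X 0 1).im + (X 1 2).im) / 2,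
    ((X 0 1).re - (X 1 2).re) / 2,
    (X 0 2).re,
    -(X 1 1).im / 2,
    ((X 0 2).im + (X 0 0).im + (X 1 1).im / 2) / 2,
    2 * ((X 0 2).im - (X 0 0).im - (X 1 1).im / 2)]

lemma su21Coords_toSu21 (h : Fin 8 → ℝ) : su21Coords (toSu21 h) = h := by
  funext i
  fin_cases i <;> simp [su21Coords, toSu21] <;> ring

lemma toSu21_injective : Function.Injective toSu21 :=
  Function.LeftInverse.injective su21Coords_toSu21

lemma hform_eq_diagonal : hform = Matrix.diagonal ![1, 1, -1] := by
  ext i j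
  fin_cases i <;> fin_cases j <;> simp [hform]

lemma conjTranspose_mul_hform_add_hform_mul_apply (X : Matrix (Fin 3) (Fin 3) ℂ) (i j : Fin 3) :
    (Xᴴ * hform + hform * X) i j = star (X j i) * ![1, 1, -1] j + ![1, 1, -1] i * X i j := by
  simp [hform_eq_diagonal, Matrix.mul_diagonal, Matrix.diagonal_mul]

lemma toSu21_mem_su21 (h : Fin 8 → ℝ) : (toSu21 h)ᴴ * hform + hform * toSu21 h = 0 := by
  ext i j
  rw [conjTranspose_mul_hform_add_hform_mul_apply]
  fin_cases i <;> fin_cases j <;> apply Complex.ext <;> simp [toSu21]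

lemma trace_toSu21 (h : Fin 8 → ℝ) : (toSu21 h).trace = 0 := by
  simp only [toSu21, LinearMap.coe_mk, AddHom.coe_mk, trace_fin_three, of_apply, cons_val',
    cons_val_zero, cons_val_one, cons_val, cons_val_fin_one]
  ring

lemma toSu21_su21Coords {X : Matrix (Fin 3) (Fin 3) ℂ} (hX : Xᴴ * hform + hform * X = 0)
    (htr : X.trace = 0) : toSu21 (su21Coords X) = X := by
  have e : ∀ i j, star (X j i) * ![1, 1, -1] j + ![1, 1, -1] i * X i j = 0 := fun i j => by
    rw [← conjTranspose_mul_hform_add_hform_mul_apply, hX, Matrix.zero_apply]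
  have e00 := e 0 0; have e01 := e 0 1; have e02 := e 0 2
  have e11 := e 1 1; have e12 := e 1 2; have e22 := e 2 2
  simp only [Fin.isValue, RCLike.star_def, Nat.succ_eq_add_one, Nat.reduceAdd, cons_val_zero, mul_one,
    one_mul, Complex.ext_iff, Complex.add_re, Complex.conj_re, Complex.zero_re, add_self_eq_zero,
    Complex.add_im, Complex.conj_im, neg_add_cancel, Complex.zero_im, and_true, cons_val_one,
    cons_val, mul_neg, Complex.neg_re, Complex.neg_im, neg_neg, neg_mul, neg_eq_zero,
    add_neg_cancel] at e00 e01 e02 e11 e12 e22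
  rw [Matrix.trace_fin_three, Complex.ext_iff] at htr
  simp only [Complex.add_re, Complex.zero_re, Complex.add_im, Complex.zero_im] at htr
  ext i j
  fin_cases i <;> fin_cases j <;> apply Complex.ext <;> simp [toSu21, su21Coords] <;> linarith

set_option maxHeartbeats 1000000 in
lemma toSu21_holBracket (a b : Fin 8 → ℝ) :
    toSu21 (holBracket a b) = toSu21 a * toSu21 b - toSu21 b * toSu21 a := by
  ext i j
  simp only [Matrix.sub_apply, Matrix.mul_apply, Fin.sum_univ_three]
  fin_cases i <;> fin_cases j <;> apply Complex.ext <;> simp [toSu21, holBracket] <;> ring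

/-- hol is an 8-dimensional Lie subalgebra of so(2,4) isomorphic to su(2,1). -/
theorem hol_subalgebra_iso_su21 :
    Function.Injective hmat ∧
    (∀ h, (hmat h)ᵀ * bg6 + bg6 * hmat h = 0) ∧
    (∀ h h', ∃ h'', hmat h * hmat h' - hmat h' * hmat h = hmat h'') ∧
    ∃ f : (Fin 8 → ℝ) → Matrix (Fin 3) (Fin 3) ℂ,
      IsLinearMap ℝ f ∧ Function.Injective f ∧
      (∀ h, (f h)ᴴ * hform + hform * f h = 0 ∧ Matrix.trace (f h) = 0) ∧
      (∀ X : Matrix (Fin 3) (Fin 3) ℂ,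
        Xᴴ * hform + hform * X = 0 → Matrix.trace X = 0 → ∃ h, f h = X) ∧
      (∀ h h' h'', hmat h'' = hmat h * hmat h' - hmat h' * hmat h →
        f h'' = f h * f h' - f h' * f h) := by
  refine ⟨hmat_injective, hmat_mem_so24, fun a b => ⟨holBracket a b, hmat_mul_sub_mul a b⟩,
    toSu21, toSu21.isLinear, toSu21_injective, fun h => ⟨toSu21_mem_su21 h, trace_toSu21 h⟩,
    fun X hX htr => ⟨su21Coords X, toSu21_su21Coords hX htr⟩, ?_⟩
  intro a b c hc
  rw [hmat_mul_sub_mul] at hc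
  rw [hmat_injective hc, toSu21_holBracket]
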